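/- arXiv:2102.11516 — 3 statements merged into one kernel-verified Lean document; each statement's English description precedes it below -/
import Mathlib

section
/- For a formal power series in two variables with integer coefficients, the truncation operation commutes with multiplication by (1 - u^i v^j) in the following sense: [(1 - u^i v^j) · [A(u,v)]_+]_+ = [(1 - u^i v^j) · A(u,v)]_+, where for A(u,v) = Σ a_{kl} u^k v^l, the truncation [A]_+ = Σ b_{kl} u^k v^l is defined by b_{kl} = a_{kl} if a_{mn} > 0 for all (m,n) ≤ (k,l) (componentwise order), and b_{kl} = 0 otherwise. -/
/-!
Call `A` positive below `p` if `0 < A q` for all `q ≤ p`. Positivity of either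
`(1 - u^i v^j)·[A]_+` or `(1 - u^i v^j)·A` below `p` forces `A` to be positive below `p`:
for the first because `[A]_+ ≥ 0`, for the second by well-founded induction, since each
coefficient of `A` then exceeds the one `(i,j)` steps earlier. Where `A` is positive below
`p`, `[A]_+` agrees with `A` below `p`, and both multiplication by `1 - u^i v^j` and
truncation at `p` only read coefficients below `p`.
-/

open scoped Classical in
/-- The bivariate truncation `[·]_+`: the coefficient at `(k,l)` is kept iff all
coefficients at componentwise-smaller positions are strictly positive. -/
noncomputable def trunc (A : ℕ × ℕ → ℤ) : ℕ × ℕ → ℤ :=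
  fun p => if ∀ q ≤ p, 0 < A q then A p else 0

/-- Multiplication of a bivariate power series (given by its coefficient function)
by `(1 - u^i v^j)`, on the level of coefficient functions. -/
noncomputable def mulOneSub (i j : ℕ) (A : ℕ × ℕ → ℤ) : ℕ × ℕ → ℤ :=
  fun p => A p - (if i ≤ p.1 ∧ j ≤ p.2 then A (p.1 - i, p.2 - j) else 0)

section Truncation

variable {A B : ℕ × ℕ → ℤ} {p : ℕ × ℕ}

theorem trunc_of_forall_pos (h : ∀ q ≤ p, 0 < A q) : trunc A p = A p := if_pos h

theorem trunc_of_not_forall_pos (h : ¬ ∀ q ≤ p, 0 < A q) : trunc A p = 0 := if_neg h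

theorem trunc_nonneg (A : ℕ × ℕ → ℤ) (p : ℕ × ℕ) : 0 ≤ trunc A p := by
  by_cases h : ∀ q ≤ p, 0 < A q
  · rw [trunc_of_forall_pos h]
    exact (h p le_rfl).le
  · rw [trunc_of_not_forall_pos h]

theorem forall_pos_of_trunc_pos (h : 0 < trunc A p) : ∀ q ≤ p, 0 < A q := by
  by_contra hA
  rw [trunc_of_not_forall_pos hA] at h
  exact h.false

theorem trunc_congr_of_forall_le (h : ∀ q ≤ p, A q = B q) : trunc A p = trunc B p := by
  have hpos : (∀ q ≤ p, 0 < A q) ↔ ∀ q ≤ p, 0 < B q :=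
    forall₂_congr fun q hq => by rw [h q hq]
  by_cases hA : ∀ q ≤ p, 0 < A q
  · rw [trunc_of_forall_pos hA, trunc_of_forall_pos (hpos.mp hA), h p le_rfl]
  · rw [trunc_of_not_forall_pos hA, trunc_of_not_forall_pos (mt hpos.mpr hA)]

end Truncation

section MulOneSub

variable {i j : ℕ} {A B : ℕ × ℕ → ℤ} {p : ℕ × ℕ}

theorem mulOneSub_le_self (hA : ∀ q, 0 ≤ A q) (p : ℕ × ℕ) : mulOneSub i j A p ≤ A p := by
  unfold mulOneSub
  split_ifs
  · linarith [hA (p.1 - i, p.2 - j)]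
  · simp

theorem mulOneSub_congr_of_forall_le (h : ∀ q ≤ p, A q = B q) :
    ∀ q ≤ p, mulOneSub i j A q = mulOneSub i j B q := by
  intro q hq
  have hshift : (q.1 - i, q.2 - j) ≤ q := Prod.mk_le_mk.mpr ⟨Nat.sub_le _ _, Nat.sub_le _ _⟩
  simp only [mulOneSub, h q hq, h _ (hshift.trans hq)]

theorem forall_pos_of_mulOneSub_trunc_pos (h : 0 < mulOneSub i j (trunc A) p) :
    ∀ q ≤ p, 0 < A q :=
  forall_pos_of_trunc_pos (h.trans_le (mulOneSub_le_self (trunc_nonneg A) p))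

theorem forall_pos_of_forall_mulOneSub_pos (hij : (i, j) ≠ (0, 0))
    (h : ∀ q ≤ p, 0 < mulOneSub i j A q) : ∀ q ≤ p, 0 < A q := by
  intro q
  induction q using WellFoundedLT.induction with
  | ind q ih =>
    intro hq
    have hq' := h q hq
    unfold mulOneSub at hq'
    split_ifs at hq' with hc
    · have hlt : (q.1 - i, q.2 - j) < q := by
        refine lt_of_le_of_ne (Prod.mk_le_mk.mpr ⟨Nat.sub_le _ _, Nat.sub_le _ _⟩) fun heq => ?_
        apply hij
        rw [Prod.ext_iff] at heq ⊢
        omega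
      linarith [ih _ hlt (hlt.le.trans hq)]
    · linarith

end MulOneSub

/-- `[(1 - u^i v^j)·[A]_+]_+ = [(1 - u^i v^j)·A]_+` for `(i,j) ≠ (0,0)`. -/
theorem trunc_mulOneSub_trunc (i j : ℕ) (hij : (i, j) ≠ (0, 0)) (A : ℕ × ℕ → ℤ) :
    trunc (mulOneSub i j (trunc A)) = trunc (mulOneSub i j A) := by
  funext p
  by_cases hA : ∀ q ≤ p, 0 < A q
  · have htrunc : ∀ q ≤ p, trunc A q = A q := fun q hq =>
      trunc_of_forall_pos fun r hr => hA r (hr.trans hq)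
    exact trunc_congr_of_forall_le (mulOneSub_congr_of_forall_le htrunc)
  · rw [trunc_of_not_forall_pos fun h => hA (forall_pos_of_mulOneSub_trunc_pos (h p le_rfl)),
      trunc_of_not_forall_pos fun h => hA (forall_pos_of_forall_mulOneSub_pos hij h)]
end

section
/- Let R = ⊕ R_{d,e} be a quotient of S = k[x₀,x₁,y₀,y₁] by a bihomogeneous ideal, and f ∈ R_{i,j}. Then the coefficientwise inequality of bivariate power series holds: (R/(f))(u,v) ≥ [(1 − u^i v^j) · R(u,v)]_+, where R(u,v) = Σ dim_k R_{d,e} u^d v^e is the bigraded Hilbert series and [·]_+ is the bivariate truncation operation. -/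
open MvPolynomial

/-- The bigrading on `S = k[x₀,x₁,y₀,y₁]`: `deg x₀ = deg x₁ = (1,0)`,
`deg y₀ = deg y₁ = (0,1)`. -/
noncomputable def bidegWt : Fin 4 → ℕ × ℕ := ![(1,0), (1,0), (0,1), (0,1)]

/-- The bigraded Hilbert function of `S/I`. -/
noncomputable def hilb (k : Type*) [Field k] (I : Ideal (MvPolynomial (Fin 4) k))
    (p : ℕ × ℕ) : ℕ :=
  Module.finrank k
    ((weightedHomogeneousSubmodule k bidegWt p).map (Ideal.Quotient.mkₐ k I).toLinearMap)

/-!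
In each bidegree `p`, write `x ∈ R_p` lying in `(f)` as `x = f b`; since `I` is bihomogeneous
one may replace `b` by its component of bidegree `p - (i, j)`. Hence the kernel of
`R_p → (R/(f))_p` is contained in `f · R_{p - (i,j)}` (and is zero when `(i, j) ≰ p`), so
`dim (R/(f))_p ≥ dim R_p - dim R_{p - (i,j)}`. This dominates even the untruncated coefficient,
and the truncation only replaces coefficients by `0 ≤ dim (R/(f))_p`.
-/

open DirectSum Module

theorem Finsupp.weight_comp {σ M N : Type*} [AddCommMonoid M] [AddCommMonoid N] (φ : M →+ N)
    (w : σ → M) (d : σ →₀ ℕ) : weight (φ ∘ w) d = φ (weight w d) := by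
  simp [weight_apply, map_finsuppSum]

/-- Pushing the weights forward along `(a, b) ↦ a + b` reduces this to the `ℕ`-graded case. -/
theorem MvPolynomial.weightedHomogeneousSubmodule_prod_fg {σ R : Type*} [CommSemiring R]
    [Finite σ] (w : σ → ℕ × ℕ) (hw : ∀ s, w s ≠ 0) (p : ℕ × ℕ) :
    (weightedHomogeneousSubmodule R w p).FG := by
  let φ : ℕ × ℕ →+ ℕ := (AddMonoidHom.id ℕ).coprod (AddMonoidHom.id ℕ)
  have hφw : ∀ s, (φ ∘ w) s ≠ 0 := fun s h => hw s (Prod.ext (by simp_all [φ]) (by simp_all [φ]))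
  have hfin : {d : σ →₀ ℕ | Finsupp.weight w d = p}.Finite :=
    (Finsupp.finite_of_nat_weight_eq _ hφw (φ p)).subset fun d hd => by
      simp_all [Finsupp.weight_comp]
  have := hfin.to_subtype
  rw [weightedHomogeneousSubmodule_eq_finsupp_supported, ← Module.Finite.iff_fg]
  exact Module.Finite.of_basis (basisRestrictSupport R _)

theorem Submodule.finrank_map_add_finrank_inf_ker {K V V₂ : Type*} [DivisionRing K]
    [AddCommGroup V] [Module K V] [AddCommGroup V₂] [Module K V₂] (f : V →ₗ[K] V₂)
    (W : Submodule K V) [FiniteDimensional K W] :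
    finrank K (W.map f) + finrank K ↥(W ⊓ LinearMap.ker f) = finrank K W := by
  rw [← LinearMap.range_domRestrict, ← (f.domRestrict W).finrank_range_add_finrank_ker,
    LinearMap.ker_domRestrict, ← (Submodule.comapSubtypeEquivOfLe inf_le_left).finrank_eq,
    Submodule.comap_inf, Submodule.comap_subtype_self, top_inf_eq]

section GradedAlgebra

variable {ι K A : Type*} [DecidableEq ι] [Field K] [CommRing A] [Algebra K A]

variable (K) in
noncomputable def Ideal.hilbertFunction (𝒜 : ι → Submodule K A) (I : Ideal A) (p : ι) : ℕ :=
  finrank K ((𝒜 p).map (Ideal.Quotient.mkₐ K I).toLinearMap)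

theorem Ideal.IsHomogeneous.exists_sub_decompose_mul_mem [AddMonoid ι]
    (𝒜 : ι → Submodule K A) [GradedAlgebra 𝒜] {I : Ideal A} (hI : I.IsHomogeneous 𝒜)
    {F x : A} {p : ι} (hx : x ∈ 𝒜 p) (hxJ : x ∈ I ⊔ Ideal.span {F}) :
    ∃ b, x - decompose 𝒜 (F * b) p ∈ I := by
  obtain ⟨a, ha, c, hc, rfl⟩ := Submodule.mem_sup.mp hxJ
  obtain ⟨b, rfl⟩ := Ideal.mem_span_singleton.mp hc
  refine ⟨b, ?_⟩
  have hx' := decompose_of_mem_same 𝒜 hx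
  rw [decompose_add, DirectSum.add_apply, Submodule.coe_add] at hx'
  rw [← hx', add_sub_cancel_right]
  exact hI p ha

variable [AddCommMonoid ι] [PartialOrder ι] [CanonicallyOrderedAdd ι] (𝒜 : ι → Submodule K A)
  [GradedAlgebra 𝒜] {I : Ideal A} {F : A} {m p : ι}

theorem Ideal.IsHomogeneous.map_mk_inf_ker_factorₐ_eq_bot (hI : I.IsHomogeneous 𝒜)
    (hF : F ∈ 𝒜 m) (hmp : ¬m ≤ p) :
    (𝒜 p).map (Ideal.Quotient.mkₐ K I).toLinearMap ⊓
        LinearMap.ker (Ideal.Quotient.factorₐ K (le_sup_left : I ≤ I ⊔ Ideal.span {F})).toLinearMap =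
      ⊥ := by
  rw [eq_bot_iff]
  rintro _ ⟨⟨x, hx, rfl⟩, hxJ⟩
  obtain ⟨b, hb⟩ := hI.exists_sub_decompose_mul_mem 𝒜 hx (Ideal.Quotient.eq_zero_iff_mem.mp hxJ)
  rw [coe_decompose_mul_of_left_mem_of_not_le 𝒜 hF hmp, sub_zero] at hb
  exact Ideal.Quotient.eq_zero_iff_mem.mpr hb

variable [Sub ι] [OrderedSub ι] [AddLeftReflectLE ι]

theorem Ideal.IsHomogeneous.map_mk_inf_ker_factorₐ_le (hI : I.IsHomogeneous 𝒜)
    (hF : F ∈ 𝒜 m) (hmp : m ≤ p) :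
    (𝒜 p).map (Ideal.Quotient.mkₐ K I).toLinearMap ⊓
        LinearMap.ker (Ideal.Quotient.factorₐ K (le_sup_left : I ≤ I ⊔ Ideal.span {F})).toLinearMap ≤
      ((𝒜 (p - m)).map (Ideal.Quotient.mkₐ K I).toLinearMap).map
        (LinearMap.mulLeft K (Ideal.Quotient.mk I F)) := by
  rintro _ ⟨⟨x, hx, rfl⟩, hxJ⟩
  obtain ⟨b, hb⟩ := hI.exists_sub_decompose_mul_mem 𝒜 hx (Ideal.Quotient.eq_zero_iff_mem.mp hxJ)
  rw [coe_decompose_mul_of_left_mem_of_le 𝒜 hF hmp] at hb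
  exact ⟨_, ⟨_, (decompose 𝒜 b (p - m)).2, rfl⟩, (Ideal.Quotient.eq.mpr hb).symm⟩

theorem Ideal.IsHomogeneous.hilbertFunction_le_sup_span_singleton
    [∀ q, FiniteDimensional K (𝒜 q)] (hI : I.IsHomogeneous 𝒜) (hF : F ∈ 𝒜 m) [Decidable (m ≤ p)] :
    I.hilbertFunction K 𝒜 p ≤ (I ⊔ Ideal.span {F}).hilbertFunction K 𝒜 p +
      if m ≤ p then I.hilbertFunction K 𝒜 (p - m) else 0 := by
  set π := (Ideal.Quotient.factorₐ K (le_sup_left : I ≤ I ⊔ Ideal.span {F})).toLinearMap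
  have hrank := Submodule.finrank_map_add_finrank_inf_ker π
    ((𝒜 p).map (Ideal.Quotient.mkₐ K I).toLinearMap)
  rw [← Submodule.map_comp] at hrank
  unfold Ideal.hilbertFunction
  split_ifs with hmp
  · have hker := (Submodule.finrank_mono (hI.map_mk_inf_ker_factorₐ_le 𝒜 hF hmp)).trans
      (Submodule.finrank_map_le _ _)
    exact hrank ▸ Nat.add_le_add_left hker _
  · rw [hI.map_mk_inf_ker_factorₐ_eq_bot 𝒜 hF hmp, finrank_bot] at hrank
    exact hrank.ge

end GradedAlgebra

theorem trunc_le {A B : ℕ × ℕ → ℤ} (hAB : ∀ q, A q ≤ B q) (hB : ∀ q, 0 ≤ B q) (p : ℕ × ℕ) :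
    trunc A p ≤ B p := by
  unfold trunc
  split_ifs
  exacts [hAB p, hB p]

theorem bidegWt_ne_zero (s : Fin 4) : bidegWt s ≠ 0 := by
  fin_cases s <;> simp [bidegWt]

/-- For a bigraded quotient `R = S/I` of `S = k[x₀,x₁,y₀,y₁]` by a bihomogeneous
ideal and `f ∈ R_{i,j}` (represented by a bihomogeneous `F` of bidegree `(i,j)`),
the Hilbert series of `R/(f)` dominates `[(1 − u^i v^j)·R(u,v)]_+` coefficientwise. -/
theorem hilb_quotient_ge_trunc (k : Type*) [Field k]
    (I : Ideal (MvPolynomial (Fin 4) k))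
    (hI : ∃ G : Set (MvPolynomial (Fin 4) k),
      (∀ g ∈ G, ∃ d : ℕ × ℕ, IsWeightedHomogeneous bidegWt g d) ∧ I = Ideal.span G)
    (i j : ℕ) (F : MvPolynomial (Fin 4) k)
    (hF : IsWeightedHomogeneous bidegWt F (i, j)) :
    ∀ p : ℕ × ℕ,
      (hilb k (I ⊔ Ideal.span {F}) p : ℤ) ≥
        trunc (mulOneSub i j (fun q => (hilb k I q : ℤ))) p := by
  let := weightedGradedAlgebra k bidegWt
  have hfin (q : ℕ × ℕ) : FiniteDimensional k (weightedHomogeneousSubmodule k bidegWt q) :=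
    Module.Finite.iff_fg.mpr (weightedHomogeneousSubmodule_prod_fg _ bidegWt_ne_zero q)
  have hIhom : I.IsHomogeneous (weightedHomogeneousSubmodule k bidegWt) := by
    obtain ⟨G, hG, rfl⟩ := hI
    exact Ideal.homogeneous_span _ G hG
  have hexact (q : ℕ × ℕ) :
      mulOneSub i j (fun q => (hilb k I q : ℤ)) q ≤ hilb k (I ⊔ Ideal.span {F}) q := by
    have h := hIhom.hilbertFunction_le_sup_span_singleton _ hF (p := q)
    simp only [Prod.le_def] at h
    dsimp only [mulOneSub]
    split_ifs at h ⊢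
    · change hilb k I q ≤ hilb k _ q + hilb k I (q.1 - i, q.2 - j) at h
      omega
    · change hilb k I q ≤ hilb k _ q + 0 at h
      omega
  exact trunc_le hexact (fun q => Int.natCast_nonneg _)
end

section
/- In S = k[x₀,x₁,y₀,y₁] bigraded as the coordinate ring of ℙ¹ × ℙ¹, the three forms x₀y₀, x₀y₁ + x₁y₀, x₁y₁ of bidegree (1,1) generate an ideal I whose bigraded Hilbert series is HS(S/I)(u,v) = [ (1 − uv)³ / ((1−u)²(1−v)²) ]_+ (so dim_k (S/I)_{1,1} = 1 and dim_k (S/I)_{d,e} = 0 whenever d + e ≥ 3 with d,e ≥ 1), verifying the generic Hilbert series conjecture for r = 3 forms of bidegree (1,1). -/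
open MvPolynomial

/-- The coefficient of `u^{p.1} v^{p.2}` in a formal power series in two variables. -/
noncomputable def coeff2 (F : MvPowerSeries (Fin 2) ℤ) (p : ℕ × ℕ) : ℤ :=
  MvPowerSeries.coeff (R := ℤ) (Finsupp.single 0 p.1 + Finsupp.single 1 p.2 : Fin 2 →₀ ℕ) F

/-- The power series `1/((1−u)²(1−v)²)`, with coefficient `(d+1)(e+1)` at `u^d v^e`. -/
noncomputable def invDenom : MvPowerSeries (Fin 2) ℤ :=
  fun m => ((m 0 : ℤ) + 1) * ((m 1 : ℤ) + 1)

set_option maxHeartbeats 1000000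
set_option synthInstance.maxHeartbeats 1000000

section Aux

lemma weight_eval (s : Fin 4 →₀ ℕ) :
    (Finsupp.weight bidegWt) s = (s 0 + s 1, s 2 + s 3) := by
  rw [Finsupp.weight_apply, Finsupp.sum_fintype _ _ (fun i => by simp)]
  simp [Fin.sum_univ_four, bidegWt, Prod.ext_iff]

variable {k : Type*} [Field k]

noncomputable def Ig (k : Type*) [Field k] : Ideal (MvPolynomial (Fin 4) k) :=
  Ideal.span {X 0 * X 2, X 0 * X 3 + X 1 * X 2, X 1 * X 3}

lemma combo (p q r : MvPolynomial (Fin 4) k) :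
    p*(X 0*X 2) + q*(X 0*X 3+X 1*X 2) + r*(X 1*X 3) ∈ Ig k := by
  refine add_mem (add_mem ?_ ?_) ?_ <;>
    exact Ideal.mul_mem_left _ _ (Ideal.subset_span (by simp))

lemma pow_mem_x (a b : ℕ) (hab : a + b = 2) (j : Fin 4) (hj : j = 2 ∨ j = 3) :
    (X 0 ^ a * X 1 ^ b * X j : MvPolynomial (Fin 4) k) ∈ Ig k := by
  have h : (a = 0 ∧ b = 2) ∨ (a = 1 ∧ b = 1) ∨ (a = 2 ∧ b = 0) := by omega
  rcases h with ⟨rfl, rfl⟩ | ⟨rfl, rfl⟩ | ⟨rfl, rfl⟩ <;> rcases hj with rfl | rfl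
  · exact (show (X 0^0*X 1^2*X 2 : MvPolynomial (Fin 4) k)
      = 0*(X 0*X 2) + X 1*(X 0*X 3+X 1*X 2) + (-X 0)*(X 1*X 3) by ring) ▸ combo _ _ _
  · exact (show (X 0^0*X 1^2*X 3 : MvPolynomial (Fin 4) k)
      = 0*(X 0*X 2) + 0*(X 0*X 3+X 1*X 2) + (X 1)*(X 1*X 3) by ring) ▸ combo _ _ _
  · exact (show (X 0^1*X 1^1*X 2 : MvPolynomial (Fin 4) k)
      = X 1*(X 0*X 2) + 0*(X 0*X 3+X 1*X 2) + 0*(X 1*X 3) by ring) ▸ combo _ _ _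
  · exact (show (X 0^1*X 1^1*X 3 : MvPolynomial (Fin 4) k)
      = 0*(X 0*X 2) + 0*(X 0*X 3+X 1*X 2) + (X 0)*(X 1*X 3) by ring) ▸ combo _ _ _
  · exact (show (X 0^2*X 1^0*X 2 : MvPolynomial (Fin 4) k)
      = X 0*(X 0*X 2) + 0*(X 0*X 3+X 1*X 2) + 0*(X 1*X 3) by ring) ▸ combo _ _ _
  · exact (show (X 0^2*X 1^0*X 3 : MvPolynomial (Fin 4) k)
      = (-X 1)*(X 0*X 2) + X 0*(X 0*X 3+X 1*X 2) + 0*(X 1*X 3) by ring) ▸ combo _ _ _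

lemma pow_mem_y (a b : ℕ) (hab : a + b = 2) (j : Fin 4) (hj : j = 0 ∨ j = 1) :
    (X j * (X 2 ^ a * X 3 ^ b) : MvPolynomial (Fin 4) k) ∈ Ig k := by
  have h : (a = 0 ∧ b = 2) ∨ (a = 1 ∧ b = 1) ∨ (a = 2 ∧ b = 0) := by omega
  rcases h with ⟨rfl, rfl⟩ | ⟨rfl, rfl⟩ | ⟨rfl, rfl⟩ <;> rcases hj with rfl | rfl
  · exact (show (X 0 * (X 2^0*X 3^2) : MvPolynomial (Fin 4) k)
      = 0*(X 0*X 2) + X 3*(X 0*X 3+X 1*X 2) + (-X 2)*(X 1*X 3) by ring) ▸ combo _ _ _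
  · exact (show (X 1 * (X 2^0*X 3^2) : MvPolynomial (Fin 4) k)
      = 0*(X 0*X 2) + 0*(X 0*X 3+X 1*X 2) + X 3*(X 1*X 3) by ring) ▸ combo _ _ _
  · exact (show (X 0 * (X 2^1*X 3^1) : MvPolynomial (Fin 4) k)
      = X 3*(X 0*X 2) + 0*(X 0*X 3+X 1*X 2) + 0*(X 1*X 3) by ring) ▸ combo _ _ _
  · exact (show (X 1 * (X 2^1*X 3^1) : MvPolynomial (Fin 4) k)
      = 0*(X 0*X 2) + 0*(X 0*X 3+X 1*X 2) + X 2*(X 1*X 3) by ring) ▸ combo _ _ _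
  · exact (show (X 0 * (X 2^2*X 3^0) : MvPolynomial (Fin 4) k)
      = X 2*(X 0*X 2) + 0*(X 0*X 3+X 1*X 2) + 0*(X 1*X 3) by ring) ▸ combo _ _ _
  · exact (show (X 1 * (X 2^2*X 3^0) : MvPolynomial (Fin 4) k)
      = (-X 3)*(X 0*X 2) + X 2*(X 0*X 3+X 1*X 2) + 0*(X 1*X 3) by ring) ▸ combo _ _ _

lemma mono_of_le {t s : Fin 4 →₀ ℕ} (ht : (monomial t 1 : MvPolynomial (Fin 4) k) ∈ Ig k)
    (hle : t ≤ s) (c : k) : (monomial s c : MvPolynomial (Fin 4) k) ∈ Ig k := by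
  have h : (monomial s c : MvPolynomial (Fin 4) k) = monomial (s - t) c * monomial t 1 := by
    rw [monomial_mul, mul_one, tsub_add_cancel_of_le hle]
  rw [h]; exact Ideal.mul_mem_left _ _ ht

lemma mono_prod_x (a b : ℕ) (j : Fin 4) :
    (monomial (Finsupp.single 0 a + Finsupp.single 1 b + Finsupp.single j 1) 1 :
      MvPolynomial (Fin 4) k) = X 0 ^ a * X 1 ^ b * X j := by
  rw [X_pow_eq_monomial, X_pow_eq_monomial, X, monomial_mul, monomial_mul]; simp

lemma mono_prod_y (a b : ℕ) (j : Fin 4) :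
    (monomial (Finsupp.single j 1 + (Finsupp.single 2 a + Finsupp.single 3 b)) 1 :
      MvPolynomial (Fin 4) k) = X j * (X 2 ^ a * X 3 ^ b) := by
  rw [X_pow_eq_monomial, X_pow_eq_monomial, X, monomial_mul, monomial_mul]; simp

lemma mono_mem_x {s : Fin 4 →₀ ℕ} (h1 : 2 ≤ s 0 + s 1) (h2 : 1 ≤ s 2 + s 3) (c : k) :
    (monomial s c : MvPolynomial (Fin 4) k) ∈ Ig k := by
  obtain ⟨a, b, hab, ha, hb⟩ : ∃ a b, a + b = 2 ∧ a ≤ s 0 ∧ b ≤ s 1 := by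
    by_cases h : 2 ≤ s 0
    · exact ⟨2, 0, rfl, h, by omega⟩
    · by_cases h' : 2 ≤ s 1
      · exact ⟨0, 2, rfl, by omega, h'⟩
      · exact ⟨1, 1, rfl, by omega, by omega⟩
  obtain ⟨j, hj, hsj⟩ : ∃ j : Fin 4, (j = 2 ∨ j = 3) ∧ 1 ≤ s j := by
    by_cases h : 1 ≤ s 2
    · exact ⟨2, Or.inl rfl, h⟩
    · exact ⟨3, Or.inr rfl, by omega⟩
  apply mono_of_le (t := Finsupp.single 0 a + Finsupp.single 1 b + Finsupp.single j 1)
  · rw [mono_prod_x]; exact pow_mem_x a b hab j hj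
  · rw [Finsupp.le_def]; intro i
    fin_cases i <;> rcases hj with rfl | rfl <;>
      simp [Finsupp.single_apply] <;> omega

lemma mono_mem_y {s : Fin 4 →₀ ℕ} (h1 : 1 ≤ s 0 + s 1) (h2 : 2 ≤ s 2 + s 3) (c : k) :
    (monomial s c : MvPolynomial (Fin 4) k) ∈ Ig k := by
  obtain ⟨a, b, hab, ha, hb⟩ : ∃ a b, a + b = 2 ∧ a ≤ s 2 ∧ b ≤ s 3 := by
    by_cases h : 2 ≤ s 2
    · exact ⟨2, 0, rfl, h, by omega⟩
    · by_cases h' : 2 ≤ s 3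
      · exact ⟨0, 2, rfl, by omega, h'⟩
      · exact ⟨1, 1, rfl, by omega, by omega⟩
  obtain ⟨j, hj, hsj⟩ : ∃ j : Fin 4, (j = 0 ∨ j = 1) ∧ 1 ≤ s j := by
    by_cases h : 1 ≤ s 0
    · exact ⟨0, Or.inl rfl, h⟩
    · exact ⟨1, Or.inr rfl, by omega⟩
  apply mono_of_le (t := Finsupp.single j 1 + (Finsupp.single 2 a + Finsupp.single 3 b))
  · rw [mono_prod_y]; exact pow_mem_y a b hab j hj
  · rw [Finsupp.le_def]; intro i
    fin_cases i <;> rcases hj with rfl | rfl <;>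
      simp [Finsupp.single_apply] <;> omega

lemma hom_subset_I (d e : ℕ) (h : 2 ≤ d ∧ 1 ≤ e ∨ 1 ≤ d ∧ 2 ≤ e) {f : MvPolynomial (Fin 4) k}
    (hf : f ∈ weightedHomogeneousSubmodule k bidegWt (d, e)) : f ∈ Ig k := by
  rw [mem_weightedHomogeneousSubmodule] at hf
  rw [f.as_sum]
  apply Ideal.sum_mem
  intro s hs
  have hw := hf (mem_support_iff.mp hs)
  rw [weight_eval, Prod.mk.injEq] at hw
  rcases h with ⟨h1, h2⟩ | ⟨h1, h2⟩
  · exact mono_mem_x (by omega) (by omega) _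
  · exact mono_mem_y (by omega) (by omega) _

lemma hilbC (d e : ℕ) (hd : 1 ≤ d) (he : 1 ≤ e) (hde : 3 ≤ d + e) :
    hilb k (Ig k) (d, e) = 0 := by
  have hbot : (weightedHomogeneousSubmodule k bidegWt ((d : ℕ), e)).map
      (Ideal.Quotient.mkₐ k (Ig k)).toLinearMap = ⊥ := by
    rw [← LinearMap.le_ker_iff_map]
    intro f hf
    rw [LinearMap.mem_ker]
    have : f ∈ Ig k := hom_subset_I d e (by omega) hf
    simpa [Ideal.Quotient.mkₐ_eq_mk, Ideal.Quotient.eq_zero_iff_mem] using this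
  rw [hilb, hbot]
  exact finrank_bot k (MvPolynomial (Fin 4) k ⧸ Ig k)

/-- kill the `y` variables -/
noncomputable def psiX (k : Type*) [Field k] :
    MvPolynomial (Fin 4) k →ₐ[k] MvPolynomial (Fin 4) k :=
  aeval ![X 0, X 1, 0, 0]

/-- kill the `x` variables -/
noncomputable def psiY (k : Type*) [Field k] :
    MvPolynomial (Fin 4) k →ₐ[k] MvPolynomial (Fin 4) k :=
  aeval ![0, 0, X 2, X 3]

lemma psiX_Ig {f : MvPolynomial (Fin 4) k} (hf : f ∈ Ig k) : psiX k f = 0 := by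
  have : Ig k ≤ RingHom.ker (psiX k).toRingHom := by
    rw [Ig, Ideal.span_le]
    intro g hg
    simp only [Set.mem_insert_iff, Set.mem_singleton_iff] at hg
    rcases hg with rfl | rfl | rfl <;>
      simp [RingHom.mem_ker, psiX]
  exact this hf

lemma psiY_Ig {f : MvPolynomial (Fin 4) k} (hf : f ∈ Ig k) : psiY k f = 0 := by
  have : Ig k ≤ RingHom.ker (psiY k).toRingHom := by
    rw [Ig, Ideal.span_le]
    intro g hg
    simp only [Set.mem_insert_iff, Set.mem_singleton_iff] at hg
    rcases hg with rfl | rfl | rfl <;>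
      simp [RingHom.mem_ker, psiY]
  exact this hf

noncomputable def vd (d : ℕ) (a : Fin (d + 1)) : MvPolynomial (Fin 4) k :=
  monomial (Finsupp.single 0 (a : ℕ) + Finsupp.single 1 (d - (a : ℕ))) 1

noncomputable def ve (e : ℕ) (a : Fin (e + 1)) : MvPolynomial (Fin 4) k :=
  monomial (Finsupp.single 2 (a : ℕ) + Finsupp.single 3 (e - (a : ℕ))) 1

lemma vd_eq (d : ℕ) (a : Fin (d + 1)) :
    (vd d a : MvPolynomial (Fin 4) k) = X 0 ^ (a : ℕ) * X 1 ^ (d - (a : ℕ)) := by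
  rw [vd, X_pow_eq_monomial, X_pow_eq_monomial, monomial_mul, one_mul]

lemma ve_eq (e : ℕ) (a : Fin (e + 1)) :
    (ve e a : MvPolynomial (Fin 4) k) = X 2 ^ (a : ℕ) * X 3 ^ (e - (a : ℕ)) := by
  rw [ve, X_pow_eq_monomial, X_pow_eq_monomial, monomial_mul, one_mul]

lemma psiX_vd (d : ℕ) (a : Fin (d + 1)) : psiX k (vd d a) = vd d a := by
  rw [vd_eq]; simp [psiX]

lemma psiY_ve (e : ℕ) (a : Fin (e + 1)) : psiY k (ve e a) = ve e a := by
  rw [ve_eq]; simp [psiY]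

lemma vd_li (d : ℕ) : LinearIndependent k (vd (k := k) d) := by
  have h := (basisMonomials (Fin 4) k).linearIndependent.comp
    (fun a : Fin (d+1) => Finsupp.single 0 (a : ℕ) + Finsupp.single 1 (d - (a : ℕ)))
    (fun a b hab => by
      have := congrArg (fun f => f 0) hab
      simp [Finsupp.single_apply] at this
      exact Fin.ext this)
  exact h

lemma ve_li (e : ℕ) : LinearIndependent k (ve (k := k) e) := by
  have h := (basisMonomials (Fin 4) k).linearIndependent.comp
    (fun a : Fin (e+1) => Finsupp.single 2 (a : ℕ) + Finsupp.single 3 (e - (a : ℕ)))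
    (fun a b hab => by
      have := congrArg (fun f => f 2) hab
      simp [Finsupp.single_apply] at this
      exact Fin.ext this)
  exact h

lemma N_eq_span_vd (d : ℕ) :
    weightedHomogeneousSubmodule k bidegWt ((d : ℕ), (0 : ℕ))
      = Submodule.span k (Set.range (vd (k := k) d)) := by
  apply le_antisymm
  · intro f hf
    rw [mem_weightedHomogeneousSubmodule] at hf
    rw [f.as_sum]
    apply Submodule.sum_mem
    intro s hs
    have hw := hf (mem_support_iff.mp hs)
    rw [weight_eval, Prod.mk.injEq] at hw
    have h0 : s 0 ≤ d := by omega
    have hs_eq : s = Finsupp.single 0 (s 0) + Finsupp.single 1 (d - s 0) := by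
      ext i
      fin_cases i <;> simp [Finsupp.single_apply] <;> omega
    have : (monomial s (coeff s f) : MvPolynomial (Fin 4) k)
        = coeff s f • vd d ⟨s 0, by omega⟩ := by
      rw [vd, smul_monomial, smul_eq_mul, mul_one]
      exact congrArg (fun t => monomial t (coeff s f)) hs_eq
    rw [this]
    exact Submodule.smul_mem _ _ (Submodule.subset_span (Set.mem_range_self _))
  · rw [Submodule.span_le]
    rintro - ⟨a, rfl⟩
    rw [SetLike.mem_coe, mem_weightedHomogeneousSubmodule, vd]
    apply isWeightedHomogeneous_monomial
    rw [weight_eval]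
    have : (a : ℕ) ≤ d := by omega
    simp [Finsupp.single_apply, Prod.ext_iff]
    omega

lemma N_eq_span_ve (e : ℕ) :
    weightedHomogeneousSubmodule k bidegWt ((0 : ℕ), (e : ℕ))
      = Submodule.span k (Set.range (ve (k := k) e)) := by
  apply le_antisymm
  · intro f hf
    rw [mem_weightedHomogeneousSubmodule] at hf
    rw [f.as_sum]
    apply Submodule.sum_mem
    intro s hs
    have hw := hf (mem_support_iff.mp hs)
    rw [weight_eval, Prod.mk.injEq] at hw
    have h0 : s 2 ≤ e := by omega
    have hs_eq : s = Finsupp.single 2 (s 2) + Finsupp.single 3 (e - s 2) := by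
      ext i
      fin_cases i <;> simp [Finsupp.single_apply] <;> omega
    have : (monomial s (coeff s f) : MvPolynomial (Fin 4) k)
        = coeff s f • ve e ⟨s 2, by omega⟩ := by
      rw [ve, smul_monomial, smul_eq_mul, mul_one]
      exact congrArg (fun t => monomial t (coeff s f)) hs_eq
    rw [this]
    exact Submodule.smul_mem _ _ (Submodule.subset_span (Set.mem_range_self _))
  · rw [Submodule.span_le]
    rintro - ⟨a, rfl⟩
    rw [SetLike.mem_coe, mem_weightedHomogeneousSubmodule, ve]
    apply isWeightedHomogeneous_monomial
    rw [weight_eval]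
    have : (a : ℕ) ≤ e := by omega
    simp [Finsupp.single_apply, Prod.ext_iff]
    omega

lemma map_li {ι : Type*} [Fintype ι] (v : ι → MvPolynomial (Fin 4) k)
    (hv : LinearIndependent k v)
    (ψ : MvPolynomial (Fin 4) k →ₐ[k] MvPolynomial (Fin 4) k)
    (hψI : ∀ f ∈ Ig k, ψ f = 0) (hψv : ∀ a, ψ (v a) = v a) :
    LinearIndependent k ((Ideal.Quotient.mkₐ k (Ig k)).toLinearMap ∘ v) := by
  rw [Fintype.linearIndependent_iff]
  intro g hg
  have h1 : (Ideal.Quotient.mkₐ k (Ig k)) (∑ a, g a • v a) = 0 := by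
    rw [map_sum]
    simpa using hg
  have h2 : (∑ a, g a • v a) ∈ Ig k := by
    rwa [Ideal.Quotient.mkₐ_eq_mk, Ideal.Quotient.eq_zero_iff_mem] at h1
  have h3 : (∑ a, g a • v a : MvPolynomial (Fin 4) k) = 0 := by
    have h := hψI _ h2
    rw [map_sum] at h
    simp_rw [map_smul, hψv] at h
    exact h
  exact Fintype.linearIndependent_iff.mp hv g h3

lemma hilbA (d : ℕ) : hilb k (Ig k) (d, 0) = d + 1 := by
  rw [hilb, N_eq_span_vd, Submodule.map_span, ← Set.range_comp]
  have li := map_li (vd d) (vd_li d) (psiX k) (fun f hf => psiX_Ig hf) (psiX_vd d)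
  rw [finrank_span_eq_card li, Fintype.card_fin]

lemma hilbA' (e : ℕ) : hilb k (Ig k) (0, e) = e + 1 := by
  rw [hilb, N_eq_span_ve, Submodule.map_span, ← Set.range_comp]
  have li := map_li (ve e) (ve_li e) (psiY k) (fun f hf => psiY_Ig hf) (psiY_ve e)
  rw [finrank_span_eq_card li, Fintype.card_fin]

lemma X0X3_not_mem : (X 0 * X 3 : MvPolynomial (Fin 4) k) ∉ Ig k := by
  set m1 : Fin 4 →₀ ℕ := Finsupp.single 0 1 + Finsupp.single 3 1 with hm1
  set m2 : Fin 4 →₀ ℕ := Finsupp.single 1 1 + Finsupp.single 2 1 with hm2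
  set lphi : MvPolynomial (Fin 4) k → k := fun f => coeff m1 f - coeff m2 f with hlphi
  intro hmem
  have key : ∀ f ∈ Ig k, ∀ p : MvPolynomial (Fin 4) k, lphi (p * f) = 0 := by
    intro f hf
    refine Submodule.span_induction ?_ ?_ ?_ ?_ hf
    · intro g hg p
      simp only [Set.mem_insert_iff, Set.mem_singleton_iff] at hg
      have e1 : (X 0 * X 2 : MvPolynomial (Fin 4) k)
          = monomial (Finsupp.single 0 1 + Finsupp.single 2 1) 1 := by
        rw [X, X, monomial_mul, one_mul]
      have e2 : (X 0 * X 3 : MvPolynomial (Fin 4) k) = monomial m1 1 := by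
        rw [X, X, monomial_mul, one_mul]
      have e3 : (X 1 * X 2 : MvPolynomial (Fin 4) k) = monomial m2 1 := by
        rw [X, X, monomial_mul, one_mul]
      have e4 : (X 1 * X 3 : MvPolynomial (Fin 4) k)
          = monomial (Finsupp.single 1 1 + Finsupp.single 3 1) 1 := by
        rw [X, X, monomial_mul, one_mul]
      have hn12 : ¬ (Finsupp.single 0 1 + Finsupp.single 2 1 ≤ m1) := by
        rw [Finsupp.le_def]; push_neg
        exact ⟨2, by simp [hm1, Finsupp.single_apply]⟩
      have hn12' : ¬ (Finsupp.single 0 1 + Finsupp.single 2 1 ≤ m2) := by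
        rw [Finsupp.le_def]; push_neg
        exact ⟨0, by simp [hm2, Finsupp.single_apply]⟩
      have hn13 : ¬ (Finsupp.single 1 1 + Finsupp.single 3 1 ≤ m1) := by
        rw [Finsupp.le_def]; push_neg
        exact ⟨1, by simp [hm1, Finsupp.single_apply]⟩
      have hn13' : ¬ (Finsupp.single 1 1 + Finsupp.single 3 1 ≤ m2) := by
        rw [Finsupp.le_def]; push_neg
        exact ⟨3, by simp [hm2, Finsupp.single_apply]⟩
      have hm1m2 : ¬ (m1 ≤ m2) := by
        rw [Finsupp.le_def]; push_neg
        exact ⟨0, by simp [hm1, hm2, Finsupp.single_apply]⟩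
      have hm2m1 : ¬ (m2 ≤ m1) := by
        rw [Finsupp.le_def]; push_neg
        exact ⟨1, by simp [hm1, hm2, Finsupp.single_apply]⟩
      rcases hg with rfl | rfl | rfl
      · simp [hlphi, e1, coeff_mul_monomial', hn12, hn12']
      · simp [hlphi, mul_add, e2, e3, coeff_mul_monomial', hm1m2, hm2m1]
      · simp [hlphi, e4, coeff_mul_monomial', hn13, hn13']
    · intro p; simp [hlphi]
    · intro x y _ _ hx hy p
      have hpxy : p * (x + y) = p * x + p * y := mul_add p x y
      rw [hpxy]
      simp only [hlphi, coeff_add] at hx hy ⊢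
      linear_combination (hx p) + (hy p)
    · intro a x _ hx p
      have : p * (a • x) = (p * a) * x := by
        rw [smul_eq_mul]; ring
      rw [this]
      exact hx (p * a)
  have h1 := key _ hmem 1
  rw [one_mul] at h1
  have e2 : (X 0 * X 3 : MvPolynomial (Fin 4) k) = monomial m1 1 := by
    rw [X, X, monomial_mul, one_mul]
  rw [hlphi] at h1
  simp only [e2, coeff_monomial] at h1
  have hne : m1 ≠ m2 := by
    rw [hm1, hm2]
    intro h
    have := congrArg (fun f => f 0) h
    simp [Finsupp.single_apply] at this
  rw [if_pos trivial, if_neg hne] at h1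
  simp at h1

lemma hilbB : hilb k (Ig k) (1, 1) = 1 := by
  set f := (Ideal.Quotient.mkₐ k (Ig k)).toLinearMap with hf
  have hfzero : ∀ g ∈ Ig k, f g = 0 := by
    intro g hg
    simpa [hf, Ideal.Quotient.mkₐ_eq_mk, Ideal.Quotient.eq_zero_iff_mem] using hg
  have hg1 : (X 0 * X 2 : MvPolynomial (Fin 4) k) ∈ Ig k := Ideal.subset_span (by simp)
  have hg2 : (X 0 * X 3 + X 1 * X 2 : MvPolynomial (Fin 4) k) ∈ Ig k :=
    Ideal.subset_span (by simp)
  have hg3 : (X 1 * X 3 : MvPolynomial (Fin 4) k) ∈ Ig k := Ideal.subset_span (by simp)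
  have hX1X2 : f (X 1 * X 2) = - f (X 0 * X 3) := by
    have h := hfzero _ hg2
    rw [map_add] at h
    linear_combination h
  have hXhom : (X 0 * X 3 : MvPolynomial (Fin 4) k)
      ∈ weightedHomogeneousSubmodule k bidegWt ((1 : ℕ), (1 : ℕ)) := by
    rw [mem_weightedHomogeneousSubmodule]
    have := (isWeightedHomogeneous_X k bidegWt (0 : Fin 4)).mul
      (isWeightedHomogeneous_X k bidegWt (3 : Fin 4))
    simpa [bidegWt, Prod.mk_add_mk] using this
  have himg : (weightedHomogeneousSubmodule k bidegWt ((1 : ℕ), (1 : ℕ))).map f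
      = Submodule.span k {f (X 0 * X 3)} := by
    apply le_antisymm
    · rw [Submodule.map_le_iff_le_comap]
      intro g hg
      rw [mem_weightedHomogeneousSubmodule] at hg
      rw [Submodule.mem_comap, g.as_sum, map_sum]
      apply Submodule.sum_mem
      intro s hs
      have hw := hg (mem_support_iff.mp hs)
      rw [weight_eval, Prod.mk.injEq] at hw
      have hx : (s 0 = 1 ∧ s 1 = 0) ∨ (s 0 = 0 ∧ s 1 = 1) := by omega
      have hy : (s 2 = 1 ∧ s 3 = 0) ∨ (s 2 = 0 ∧ s 3 = 1) := by omega
      have hmono : ∀ (i j : Fin 4), s = Finsupp.single i 1 + Finsupp.single j 1 →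
          (monomial s (coeff s g) : MvPolynomial (Fin 4) k)
            = coeff s g • (X i * X j) := by
        intro i j hs_eq
        rw [show (X i * X j : MvPolynomial (Fin 4) k)
            = monomial (Finsupp.single i 1 + Finsupp.single j 1) 1 by
          rw [X, X, monomial_mul, one_mul]]
        rw [smul_monomial, smul_eq_mul, mul_one, hs_eq]
      rcases hx with ⟨h0, h1⟩ | ⟨h0, h1⟩ <;> rcases hy with ⟨h2, h3⟩ | ⟨h2, h3⟩
      · rw [hmono 0 2 (by ext t; fin_cases t <;> simp [Finsupp.single_apply] <;> omega)]
        rw [map_smul, hfzero _ hg1, smul_zero]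
        exact Submodule.zero_mem _
      · rw [hmono 0 3 (by ext t; fin_cases t <;> simp [Finsupp.single_apply] <;> omega)]
        rw [map_smul]
        exact Submodule.smul_mem _ _ (Submodule.mem_span_singleton_self _)
      · rw [hmono 1 2 (by ext t; fin_cases t <;> simp [Finsupp.single_apply] <;> omega)]
        rw [map_smul, hX1X2]
        exact Submodule.smul_mem _ _ (Submodule.neg_mem _
          (Submodule.mem_span_singleton_self _))
      · rw [hmono 1 3 (by ext t; fin_cases t <;> simp [Finsupp.single_apply] <;> omega)]
        rw [map_smul, hfzero _ hg3, smul_zero]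
        exact Submodule.zero_mem _
    · rw [Submodule.span_le, Set.singleton_subset_iff]
      exact ⟨X 0 * X 3, hXhom, rfl⟩
  have hne : f (X 0 * X 3) ≠ 0 := by
    intro h
    exact X0X3_not_mem (by
      rw [AlgHom.toLinearMap_apply, Ideal.Quotient.mkₐ_eq_mk] at h
      rwa [Ideal.Quotient.eq_zero_iff_mem] at h)
  rw [hilb, himg, finrank_span_singleton hne]

lemma coeff2_term (j d e : ℕ) :
    coeff2 ((MvPowerSeries.X 0 * MvPowerSeries.X 1) ^ j * invDenom) (d, e)
      = if j ≤ d ∧ j ≤ e then ((d : ℤ) - j + 1) * ((e : ℤ) - j + 1) else 0 := by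
  have hX : (MvPowerSeries.X 0 * MvPowerSeries.X 1 : MvPowerSeries (Fin 2) ℤ) ^ j
      = MvPowerSeries.monomial (R := ℤ) (Finsupp.single 0 j + Finsupp.single 1 j) 1 := by
    rw [mul_pow, MvPowerSeries.X_pow_eq, MvPowerSeries.X_pow_eq,
      MvPowerSeries.monomial_mul_monomial, one_mul]
  rw [coeff2, hX, MvPowerSeries.coeff_monomial_mul]
  have hcond : (Finsupp.single (0 : Fin 2) j + Finsupp.single 1 j
      ≤ Finsupp.single 0 d + Finsupp.single 1 e) ↔ (j ≤ d ∧ j ≤ e) := by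
    rw [Finsupp.le_def]
    constructor
    · intro h
      constructor
      · simpa [Finsupp.single_apply] using h 0
      · simpa [Finsupp.single_apply] using h 1
    · rintro ⟨h1, h2⟩ i
      fin_cases i <;> simp [Finsupp.single_apply] <;> omega
  by_cases h : j ≤ d ∧ j ≤ e
  · rw [if_pos (hcond.mpr h), if_pos h, one_mul, MvPowerSeries.coeff_apply]
    set m' : Fin 2 →₀ ℕ := (Finsupp.single 0 d + Finsupp.single 1 e)
      - (Finsupp.single 0 j + Finsupp.single 1 j) with hm'
    have h0 : m' 0 = d - j := by
      rw [hm']; simp [Finsupp.tsub_apply, Finsupp.single_apply]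
    have h1 : m' 1 = e - j := by
      rw [hm']; simp [Finsupp.tsub_apply, Finsupp.single_apply]
    show ((m' 0 : ℤ) + 1) * ((m' 1 : ℤ) + 1) = _
    rw [h0, h1]
    push_cast [Nat.cast_sub h.1, Nat.cast_sub h.2]
    ring
  · rw [if_neg (fun hc => h (hcond.mp hc)), if_neg h]

lemma coeffF (p : ℕ × ℕ) :
    coeff2 ((1 - MvPowerSeries.X 0 * MvPowerSeries.X 1) ^ 3 * invDenom) p
      = coeff2 ((MvPowerSeries.X 0 * MvPowerSeries.X 1) ^ 0 * invDenom) p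
        - 3 * coeff2 ((MvPowerSeries.X 0 * MvPowerSeries.X 1) ^ 1 * invDenom) p
        + 3 * coeff2 ((MvPowerSeries.X 0 * MvPowerSeries.X 1) ^ 2 * invDenom) p
        - coeff2 ((MvPowerSeries.X 0 * MvPowerSeries.X 1) ^ 3 * invDenom) p := by
  have hF : (1 - MvPowerSeries.X 0 * MvPowerSeries.X 1 : MvPowerSeries (Fin 2) ℤ) ^ 3 * invDenom
      = (MvPowerSeries.X 0 * MvPowerSeries.X 1) ^ 0 * invDenom
        - (3 : ℤ) • ((MvPowerSeries.X 0 * MvPowerSeries.X 1) ^ 1 * invDenom)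
        + (3 : ℤ) • ((MvPowerSeries.X 0 * MvPowerSeries.X 1) ^ 2 * invDenom)
        - (MvPowerSeries.X 0 * MvPowerSeries.X 1) ^ 3 * invDenom := by
    rw [zsmul_eq_mul, zsmul_eq_mul]
    push_cast
    ring
  rw [coeff2, hF, map_sub, map_add, map_sub, map_smul, map_smul]
  simp only [smul_eq_mul]
  rfl

lemma Aval (d e : ℕ) :
    coeff2 ((1 - MvPowerSeries.X 0 * MvPowerSeries.X 1) ^ 3 * invDenom) (d, e)
      = ((d : ℤ) + 1) * ((e : ℤ) + 1)
        - 3 * (if 1 ≤ d ∧ 1 ≤ e then (d : ℤ) * (e : ℤ) else 0)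
        + 3 * (if 2 ≤ d ∧ 2 ≤ e then ((d : ℤ) - 1) * ((e : ℤ) - 1) else 0)
        - (if 3 ≤ d ∧ 3 ≤ e then ((d : ℤ) - 2) * ((e : ℤ) - 2) else 0) := by
  rw [coeffF, coeff2_term, coeff2_term, coeff2_term, coeff2_term]
  rw [if_pos ⟨Nat.zero_le d, Nat.zero_le e⟩]
  push_cast
  split_ifs <;> ring

lemma trunc_x (d : ℕ) :
    trunc (coeff2 ((1 - MvPowerSeries.X 0 * MvPowerSeries.X 1) ^ 3 * invDenom)) (d, 0)
      = (d : ℤ) + 1 := by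
  rw [trunc, if_pos, Aval]
  · norm_num
  · rintro ⟨a, b⟩ hq
    rw [Prod.mk_le_mk] at hq
    obtain rfl : b = 0 := by omega
    rw [Aval]
    have h1 : ¬(1 ≤ a ∧ 1 ≤ 0) := by omega
    have h2 : ¬(2 ≤ a ∧ 2 ≤ 0) := by omega
    have h3 : ¬(3 ≤ a ∧ 3 ≤ 0) := by omega
    simp only [h1, h2, h3, if_false]
    have : (0:ℤ) ≤ a := Int.natCast_nonneg a
    nlinarith

lemma trunc_y (e : ℕ) :
    trunc (coeff2 ((1 - MvPowerSeries.X 0 * MvPowerSeries.X 1) ^ 3 * invDenom)) (0, e)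
      = (e : ℤ) + 1 := by
  rw [trunc, if_pos, Aval]
  · norm_num
  · rintro ⟨a, b⟩ hq
    rw [Prod.mk_le_mk] at hq
    obtain rfl : a = 0 := by omega
    rw [Aval]
    have h1 : ¬(1 ≤ 0 ∧ 1 ≤ b) := by omega
    have h2 : ¬(2 ≤ 0 ∧ 2 ≤ b) := by omega
    have h3 : ¬(3 ≤ 0 ∧ 3 ≤ b) := by omega
    simp only [h1, h2, h3, if_false]
    have : (0:ℤ) ≤ b := Int.natCast_nonneg b
    nlinarith

lemma trunc_11 :
    trunc (coeff2 ((1 - MvPowerSeries.X 0 * MvPowerSeries.X 1) ^ 3 * invDenom)) (1, 1)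
      = 1 := by
  rw [trunc, if_pos, Aval]
  · norm_num
  · rintro ⟨a, b⟩ hq
    rw [Prod.mk_le_mk] at hq
    obtain ⟨ha, hb⟩ := hq
    interval_cases a <;> interval_cases b <;> (rw [Aval]; norm_num)

lemma trunc_zero (d e : ℕ) (hd : 1 ≤ d) (he : 1 ≤ e) (h : 3 ≤ d + e) :
    trunc (coeff2 ((1 - MvPowerSeries.X 0 * MvPowerSeries.X 1) ^ 3 * invDenom)) (d, e)
      = 0 := by
  rw [trunc, if_neg]
  intro hall
  by_cases h2 : 2 ≤ d
  · have := hall (2, 1) (Prod.mk_le_mk.mpr ⟨by omega, by omega⟩)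
    rw [Aval] at this
    norm_num at this
  · have := hall (1, 2) (Prod.mk_le_mk.mpr ⟨by omega, by omega⟩)
    rw [Aval] at this
    norm_num at this

end Aux

/-- In `S = k[x₀,x₁,y₀,y₁]`, the three bidegree-`(1,1)` forms
`x₀y₀`, `x₀y₁ + x₁y₀`, `x₁y₁` generate an ideal `I` with
`dim (S/I)_{1,1} = 1`, `dim (S/I)_{d,e} = 0` whenever `d,e ≥ 1` and `d + e ≥ 3`,
and indeed `(S/I)(u,v) = [(1 − uv)³/((1−u)²(1−v)²)]_+`, verifying the generic
Hilbert series conjecture for `r = 3` forms of bidegree `(1,1)`. -/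
theorem hilbert_series_three_bilinear_forms (k : Type*) [Field k] [CharZero k] :
    hilb k (Ideal.span {(X 0 * X 2 : MvPolynomial (Fin 4) k),
        X 0 * X 3 + X 1 * X 2, X 1 * X 3}) (1, 1) = 1 ∧
    (∀ d e : ℕ, 1 ≤ d → 1 ≤ e → 3 ≤ d + e →
      hilb k (Ideal.span {(X 0 * X 2 : MvPolynomial (Fin 4) k),
        X 0 * X 3 + X 1 * X 2, X 1 * X 3}) (d, e) = 0) ∧
    (∀ p : ℕ × ℕ,
      (hilb k (Ideal.span {(X 0 * X 2 : MvPolynomial (Fin 4) k),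
        X 0 * X 3 + X 1 * X 2, X 1 * X 3}) p : ℤ) =
      trunc (coeff2
        ((1 - MvPowerSeries.X 0 * MvPowerSeries.X 1) ^ 3 * invDenom)) p) := by
  have hIg : Ideal.span {(X 0 * X 2 : MvPolynomial (Fin 4) k),
      X 0 * X 3 + X 1 * X 2, X 1 * X 3} = Ig k := rfl
  rw [hIg]
  refine ⟨hilbB, fun d e hd he h => hilbC d e hd he h, ?_⟩
  rintro ⟨d, e⟩
  by_cases he0 : e = 0
  · subst he0
    rw [hilbA d, trunc_x]
    push_cast
    ring
  by_cases hd0 : d = 0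
  · subst hd0
    rw [hilbA' e, trunc_y]
    push_cast
    ring
  by_cases h3 : 3 ≤ d + e
  · rw [hilbC d e (by omega) (by omega) h3, trunc_zero d e (by omega) (by omega) h3]
    norm_num
  · obtain ⟨rfl, rfl⟩ : d = 1 ∧ e = 1 := by omega
    rw [hilbB, trunc_11]
    norm_num
end
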